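/- For any permutation w in S_n, the map R ↦ {(j,i) : (i,j) ∈ R} is a bijection between the rc-graphs of w and the rc-graphs of w^{-1}. In particular R_top(w), defined as {(i,j) : i ≤ c_j(w^{-1})}, is the transpose of R_bot(w^{-1}) and is an rc-graph for w. -/

import Mathlib

/-- The adjacent transposition `s_a = (a, a+1)`, as a permutation of `ℕ` (we use the
letters `1, …, n-1`, permutations act on `{1, …, n}`). -/
def sTrans (a : ℕ) : Equiv.Perm ℕ := Equiv.swap a (a + 1)

/-- The product `s_{a_1} s_{a_2} ⋯` of a word. -/
def wordProd (L : List ℕ) : Equiv.Perm ℕ := (L.map sTrans).prod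

/-- `L` is a reduced word for `w`: a word in the letters `a ≥ 1` whose product of adjacent
transpositions is `w`, of minimal possible length. -/
def IsReducedWordFor (w : Equiv.Perm ℕ) (L : List ℕ) : Prop :=
  (∀ a ∈ L, 1 ≤ a) ∧ wordProd L = w ∧
    ∀ M : List ℕ, (∀ a ∈ M, 1 ≤ a) → wordProd M = w → L.length ≤ M.length

/-- `w` is a permutation of `{1, …, n}`: it fixes everything outside this interval. -/
def IsPermOn (n : ℕ) (w : Equiv.Perm ℕ) : Prop :=
  ∀ i : ℕ, w i ≠ i → 1 ≤ i ∧ i ≤ n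

/-- The strict linear order on crosses: `(i,j) < (i',j')` iff `i < i'`, or `i = i'` and
`j > j'`. -/
def rcLT (p q : ℕ × ℕ) : Prop := p.1 < q.1 ∨ (p.1 = q.1 ∧ q.2 < p.2)

/-- `L` is the listing of the finite set `R` in increasing `rcLT`-order. -/
def IsRCReading (R : Finset (ℕ × ℕ)) (L : List (ℕ × ℕ)) : Prop :=
  L.toFinset = R ∧ L.Chain' rcLT

/-- The word `a_1 a_2 ⋯` with `a_k = i_k + j_k - 1` read off a listing of crosses. -/
def rcWord (L : List (ℕ × ℕ)) : List ℕ := L.map (fun p => p.1 + p.2 - 1)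

/-- `R` is an rc-graph for `w ∈ Sₙ`: a subset of `{(i,j) : i,j ≥ 1, i+j ≤ n}` whose reading
word (in the prescribed linear order) is a reduced word for `w`. -/
def IsRCGraph (n : ℕ) (w : Equiv.Perm ℕ) (R : Finset (ℕ × ℕ)) : Prop :=
  (∀ p ∈ R, 1 ≤ p.1 ∧ 1 ≤ p.2 ∧ p.1 + p.2 ≤ n) ∧
    ∀ L : List (ℕ × ℕ), IsRCReading R L → IsReducedWordFor w (rcWord L)

/-- The code of `w`: `c_i = #{ j : j > i ∧ w_j < w_i }`. -/
def permCode (n : ℕ) (w : Equiv.Perm ℕ) (i : ℕ) : ℕ :=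
  ((Finset.Icc 1 n).filter (fun j => i < j ∧ w j < w i)).card

/-- The bottom rc-graph `R_bot(w) = { (i,j) : 1 ≤ j ≤ c_i(w) }`. -/
def Rbot (n : ℕ) (w : Equiv.Perm ℕ) : Finset (ℕ × ℕ) :=
  ((Finset.Icc 1 n) ×ˢ (Finset.Icc 1 n)).filter (fun p => p.2 ≤ permCode n w p.1)

/-- The top rc-graph `R_top(w) = { (i,j) : i ≤ c_j(w⁻¹) }`. -/
def Rtop (n : ℕ) (w : Equiv.Perm ℕ) : Finset (ℕ × ℕ) :=
  ((Finset.Icc 1 n) ×ˢ (Finset.Icc 1 n)).filter (fun p => p.1 ≤ permCode n w⁻¹ p.2)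

-- ## basics
lemma sTrans_invol (a : ℕ) : sTrans a * sTrans a = 1 := by
  simp [sTrans]

lemma sTrans_inv (a : ℕ) : (sTrans a)⁻¹ = sTrans a := by
  simp [sTrans]

lemma wordProd_nil : wordProd [] = 1 := rfl

lemma wordProd_cons (a : ℕ) (L : List ℕ) : wordProd (a :: L) = sTrans a * wordProd L := by
  simp [wordProd]

lemma wordProd_append (L M : List ℕ) : wordProd (L ++ M) = wordProd L * wordProd M := by
  simp [wordProd]

lemma wordProd_reverse (L : List ℕ) : wordProd L.reverse = (wordProd L)⁻¹ := by
  induction L with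
  | nil => simp [wordProd]
  | cons a L ih =>
      rw [List.reverse_cons, wordProd_append, wordProd_cons, ih]
      simp [wordProd, sTrans_inv]

lemma sTrans_commute {a b : ℕ} (h : a + 2 ≤ b ∨ b + 2 ≤ a ∨ a = b) :
    Commute (sTrans a) (sTrans b) := by
  rcases h with h | h | h
  · apply Equiv.Perm.Disjoint.commute
    intro x
    by_cases hx : x = a ∨ x = a + 1
    · right
      rcases hx with rfl | rfl <;>
        exact Equiv.swap_apply_of_ne_of_ne (by omega) (by omega)
    · left
      push_neg at hx
      exact Equiv.swap_apply_of_ne_of_ne hx.1 hx.2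
  · exact (Commute.symm <| by
      apply Equiv.Perm.Disjoint.commute
      intro x
      by_cases hx : x = b ∨ x = b + 1
      · right
        rcases hx with rfl | rfl <;>
          exact Equiv.swap_apply_of_ne_of_ne (by omega) (by omega)
      · left
        push_neg at hx
        exact Equiv.swap_apply_of_ne_of_ne hx.1 hx.2)
  · subst h; exact Commute.refl _

-- reversal correspondence for reduced words
lemma isReducedWordFor_reverse {w : Equiv.Perm ℕ} {L : List ℕ} (h : IsReducedWordFor w L) :
    IsReducedWordFor w⁻¹ L.reverse := by
  obtain ⟨h1, h2, h3⟩ := h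
  refine ⟨fun a ha => h1 a (List.mem_reverse.mp ha), by rw [wordProd_reverse, h2], ?_⟩
  intro M hM hMp
  rw [List.length_reverse]
  have := h3 M.reverse (fun a ha => hM a (List.mem_reverse.mp ha))
    (by rw [wordProd_reverse, hMp, inv_inv])
  simpa using this

lemma rcLT_trans : Transitive rcLT := by
  rintro p q r (h | ⟨h1, h2⟩) (h' | ⟨h1', h2'⟩) <;> unfold rcLT <;> omega

lemma rcLT_irrefl (p : ℕ × ℕ) : ¬ rcLT p p := by unfold rcLT; omega

lemma rcLT_asymm {p q : ℕ × ℕ} (h : rcLT p q) : ¬ rcLT q p := by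
  unfold rcLT at *; omega

def rcLE (p q : ℕ × ℕ) : Prop := rcLT p q ∨ p = q

instance : DecidableRel rcLE := fun p q => by unfold rcLE rcLT; infer_instance

instance : IsTrans (ℕ × ℕ) rcLE where
  trans := by
    rintro p q r (h | rfl) (h' | rfl)
    · exact Or.inl (rcLT_trans h h')
    · exact Or.inl h
    · exact Or.inl h'
    · exact Or.inr rfl

instance : IsAntisymm (ℕ × ℕ) rcLE where
  antisymm := by
    rintro p q (h | rfl) (h' | h')
    · exact absurd h' (rcLT_asymm h)
    · exact h'.symm
    · rfl
    · rfl

instance : IsTotal (ℕ × ℕ) rcLE where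
  total := by
    intro p q
    unfold rcLE rcLT
    by_cases h : p = q
    · exact Or.inl (Or.inr h)
    · have : ¬(p.1 = q.1 ∧ p.2 = q.2) := fun hc => h (Prod.ext hc.1 hc.2)
      omega

lemma chain'_rcLT_iff_pairwise {L : List (ℕ × ℕ)} : L.Chain' rcLT ↔ L.Pairwise rcLT :=
  haveI : IsTrans (ℕ × ℕ) rcLT := ⟨fun _ _ _ h h' => rcLT_trans h h'⟩
  List.isChain_iff_pairwise

lemma nodup_of_pairwise_rcLT {L : List (ℕ × ℕ)} (h : L.Pairwise rcLT) : L.Nodup :=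
  h.imp (fun hpq => by rintro rfl; exact rcLT_irrefl _ hpq)

/-- canonical reading of a finset -/
noncomputable def rcList (R : Finset (ℕ × ℕ)) : List (ℕ × ℕ) := R.sort rcLE

lemma rcList_isReading (R : Finset (ℕ × ℕ)) : IsRCReading R (rcList R) := by
  constructor
  · exact Finset.sort_toFinset _ _
  · rw [chain'_rcLT_iff_pairwise]
    have h1 : (rcList R).Pairwise rcLE := Finset.pairwise_sort _ _
    have h2 : (rcList R).Nodup := Finset.sort_nodup _ _
    refine (h1.and h2).imp ?_
    rintro a b ⟨(h | rfl), hne⟩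
    · exact h
    · exact absurd rfl hne

lemma reading_eq_rcList {R : Finset (ℕ × ℕ)} {L : List (ℕ × ℕ)} (h : IsRCReading R L) :
    L = rcList R := by
  obtain ⟨h1, h2⟩ := h
  rw [chain'_rcLT_iff_pairwise] at h2
  have hnd : L.Nodup := nodup_of_pairwise_rcLT h2
  obtain ⟨h1', h2'⟩ := rcList_isReading R
  rw [chain'_rcLT_iff_pairwise] at h2'
  have hnd' : (rcList R).Nodup := nodup_of_pairwise_rcLT h2'
  have hperm : L.Perm (rcList R) :=
    List.perm_of_nodup_nodup_toFinset_eq hnd hnd' (h1.trans h1'.symm)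
  haveI : IsAntisymm (ℕ × ℕ) rcLT := ⟨fun a b h h' => absurd h' (rcLT_asymm h)⟩
  exact hperm.eq_of_pairwise' h2 h2'

lemma rcList_insert {p : ℕ × ℕ} {R : Finset (ℕ × ℕ)} (h1 : ∀ q ∈ R, rcLT p q) (h2 : p ∉ R) :
    rcList (insert p R) = p :: rcList R :=
  Finset.sort_insert rcLE (fun b hb => Or.inl (h1 b hb)) h2

lemma comm_prod {α G : Type*} [Monoid G] (f : α → G) (r' s' : α → α → Prop)
    (hs'asym : ∀ p q, s' p q → ¬ s' q p)
    (hagree : ∀ p q, r' p q → ¬ Commute (f p) (f q) → s' p q) :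
    ∀ L M : List α, L.Perm M → L.Pairwise r' → M.Pairwise s' →
      (L.map f).prod = (M.map f).prod := by
  intro L
  induction L with
  | nil => intro M hperm _ _; rw [hperm.nil_eq]
  | cons p T ih =>
      intro M hperm hL hM
      have hpM : p ∈ M := hperm.mem_iff.mp (List.mem_cons_self (a := p) (l := T))
      obtain ⟨A, B, rfl⟩ := List.append_of_mem hpM
      have hT : T.Perm (A ++ B) := by
        have : (p :: T).Perm (p :: (A ++ B)) := hperm.trans List.perm_middle
        exact this.cons_inv
      rw [List.pairwise_append] at hM
      obtain ⟨hA, hpB, hAB⟩ := hM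
      have hcomm : ∀ q ∈ A, Commute (f p) (f q) := by
        intro q hq
        by_contra hnc
        have hqT : q ∈ T := hT.mem_iff.mpr (List.mem_append_left B hq)
        have hr' : r' p q := (List.pairwise_cons.mp hL).1 q hqT
        exact hs'asym q p (hAB q hq p (List.mem_cons_self (a := p) (l := B))) (hagree p q hr' hnc)
      have hABpair : (A ++ B).Pairwise s' := by
        rw [List.pairwise_append]
        exact ⟨hA, (List.pairwise_cons.mp hpB).2,
          fun a ha b hb => hAB a ha b (List.mem_cons_of_mem p hb)⟩
      have hcp : Commute (f p) (A.map f).prod :=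
        Commute.list_prod_right _ _ (fun y hy => by
          obtain ⟨q, hq, rfl⟩ := List.mem_map.mp hy
          exact hcomm q hq)
      calc ((p :: T).map f).prod = f p * (T.map f).prod := by simp
        _ = f p * ((A ++ B).map f).prod :=
            by rw [ih (A ++ B) hT (List.pairwise_cons.mp hL).2 hABpair]
        _ = f p * ((A.map f).prod * (B.map f).prod) := by simp
        _ = (A.map f).prod * (f p * (B.map f).prod) := by
            rw [← mul_assoc, hcp.eq, mul_assoc]
        _ = ((A ++ p :: B).map f).prod := by simp [mul_assoc]

-- ## transpose
def swapf (p : ℕ × ℕ) : ℕ × ℕ := (p.2, p.1)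

def colLT (p q : ℕ × ℕ) : Prop := p.2 < q.2 ∨ (p.2 = q.2 ∧ q.1 < p.1)

def aVal (p : ℕ × ℕ) : ℕ := p.1 + p.2 - 1

lemma sTrans_not_commute {a b : ℕ} (h : ¬ Commute (sTrans a) (sTrans b)) :
    b = a + 1 ∨ a = b + 1 := by
  by_contra hc
  exact h (sTrans_commute (by omega))

def bnds (p : ℕ × ℕ) : Prop := 1 ≤ p.1 ∧ 1 ≤ p.2

lemma rc_col_agree {p q : ℕ × ℕ} (hp : bnds p) (hq : bnds q) (hlt : rcLT p q)
    (hnc : ¬ Commute (sTrans (aVal p)) (sTrans (aVal q))) : colLT q p := by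
  have := sTrans_not_commute hnc
  obtain ⟨hp1, hp2⟩ := hp
  obtain ⟨hq1, hq2⟩ := hq
  unfold aVal at this
  unfold rcLT at hlt
  unfold colLT
  omega

lemma wordProd_rcWord (K : List (ℕ × ℕ)) :
    wordProd (rcWord K) = (K.map (fun p => sTrans (aVal p))).prod := by
  unfold wordProd rcWord
  rw [List.map_map]
  rfl

lemma rcWord_length (K : List (ℕ × ℕ)) : (rcWord K).length = K.length := by
  simp [rcWord]

lemma list_toFinset_map {α β : Type*} [DecidableEq α] [DecidableEq β] (l : List α) (f : α → β) :
    (l.map f).toFinset = l.toFinset.image f := by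
  ext x; simp

lemma swapf_swapf : swapf ∘ swapf = id := by
  funext p; simp [swapf]

lemma swapf_inj : Function.Injective swapf := by
  intro p q h
  simpa [swapf, Prod.ext_iff, and_comm] using h

lemma transpose_forward {n : ℕ} {w : Equiv.Perm ℕ} {R : Finset (ℕ × ℕ)}
    (h : IsRCGraph n w R) : IsRCGraph n w⁻¹ (R.image swapf) := by
  obtain ⟨hbd, hred⟩ := h
  constructor
  · rintro p hp
    obtain ⟨q, hq, rfl⟩ := Finset.mem_image.mp hp
    have := hbd q hq
    exact ⟨this.2.1, this.1, by simp [swapf]; omega⟩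
  intro L' hL'
  -- the canonical reading of R
  have hLred := hred (rcList R) (rcList_isReading R)
  set L := rcList R with hLdef
  have hLpair : L.Pairwise rcLT := by
    rw [← chain'_rcLT_iff_pairwise]; exact (rcList_isReading R).2
  have hLfin : L.toFinset = R := (rcList_isReading R).1
  -- transform L'
  obtain ⟨hL'fin, hL'chain⟩ := hL'
  set M : List (ℕ × ℕ) := (L'.map swapf).reverse with hMdef
  have hMfin : M.toFinset = R := by
    rw [hMdef, List.toFinset_reverse, list_toFinset_map, hL'fin,
      Finset.image_image, swapf_swapf, Finset.image_id]
  have hL'pair : L'.Pairwise rcLT := chain'_rcLT_iff_pairwise.mp hL'chain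
  have hMpair : M.Pairwise (fun p q => colLT q p) := by
    rw [hMdef, List.pairwise_reverse, List.pairwise_map]
    exact hL'pair.imp (fun {p q} hpq => hpq)
  -- membership bounds
  have hLmem : ∀ p ∈ L, bnds p := by
    intro p hp
    have : p ∈ R := hLfin ▸ List.mem_toFinset.mpr hp
    exact ⟨(hbd p this).1, (hbd p this).2.1⟩
  have hMmem : ∀ p ∈ M, bnds p := by
    intro p hp
    have : p ∈ R := hMfin ▸ List.mem_toFinset.mpr hp
    exact ⟨(hbd p this).1, (hbd p this).2.1⟩
  -- perm
  have hLnd : L.Nodup := nodup_of_pairwise_rcLT hLpair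
  have hMnd : M.Nodup := by
    rw [hMdef, List.nodup_reverse]
    exact (nodup_of_pairwise_rcLT hL'pair).map swapf_inj
  have hperm : L.Perm M :=
    List.perm_of_nodup_nodup_toFinset_eq hLnd hMnd (hLfin.trans hMfin.symm)
  -- the key commutation
  have hLpair' : L.Pairwise (fun p q => rcLT p q ∧ bnds p ∧ bnds q) :=
    hLpair.and ((List.pairwise_of_forall_mem_list (fun a ha b hb => ⟨hLmem a ha, hLmem b hb⟩)))
  have hMpair' : M.Pairwise (fun p q => colLT q p ∧ bnds p ∧ bnds q) :=
    hMpair.and ((List.pairwise_of_forall_mem_list (fun a ha b hb => ⟨hMmem a ha, hMmem b hb⟩)))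
  have hkey : (L.map (fun p => sTrans (aVal p))).prod = (M.map (fun p => sTrans (aVal p))).prod := by
    refine comm_prod _ _ _ ?_ ?_ L M hperm hLpair' hMpair'
    · rintro p q ⟨h1, _, _⟩ ⟨h2, _, _⟩
      unfold colLT at h1 h2; omega
    · rintro p q ⟨h1, h2, h3⟩ hnc
      exact ⟨rc_col_agree h2 h3 h1 hnc, h2, h3⟩
  -- conclude products
  obtain ⟨hlet, hprodL, hminL⟩ := hLred
  have hprod' : wordProd (rcWord L') = w⁻¹ := by
    have e1 : wordProd (rcWord M) = w := by
      rw [wordProd_rcWord, ← hkey, ← wordProd_rcWord, hprodL]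
    have e2 : rcWord M = (rcWord L').reverse := by
      rw [hMdef]
      unfold rcWord
      rw [List.map_reverse, List.map_map]
      congr 1
      apply List.map_congr_left
      intro p _
      simp [swapf, aVal, Function.comp]
      omega
    rw [e2, wordProd_reverse] at e1
    rw [← e1, inv_inv]
  refine ⟨?_, hprod', ?_⟩
  · intro a ha
    obtain ⟨p, hp, rfl⟩ := List.mem_map.mp ha
    have : p ∈ R.image swapf := hL'fin ▸ List.mem_toFinset.mpr hp
    obtain ⟨q, hq, rfl⟩ := Finset.mem_image.mp this
    have := hbd q hq
    simp [swapf]; omega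
  · intro M' hM' hM'p
    have hlen : (rcWord L').length = (rcWord L).length := by
      rw [rcWord_length, rcWord_length]
      have : L'.length = (R.image swapf).card := by
        rw [← hL'fin]; exact (List.toFinset_card_of_nodup (nodup_of_pairwise_rcLT hL'pair)).symm
      rw [this, Finset.card_image_of_injective _ swapf_inj, ← hLfin,
        List.toFinset_card_of_nodup hLnd]
    rw [hlen]
    have := hminL M'.reverse (fun a ha => hM' a (List.mem_reverse.mp ha))
      (by rw [wordProd_reverse, hM'p, inv_inv])
    simpa using this

-- ## inversions
def invSet (n : ℕ) (v : Equiv.Perm ℕ) : Finset (ℕ × ℕ) :=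
  ((Finset.Icc 1 n) ×ˢ (Finset.Icc 1 n)).filter (fun p => p.1 < p.2 ∧ v p.2 < v p.1)

lemma card_invSet (n : ℕ) (v : Equiv.Perm ℕ) :
    (invSet n v).card = ∑ i ∈ Finset.Icc 1 n, permCode n v i := by
  unfold invSet permCode
  rw [Finset.card_filter, Finset.sum_product]
  congr 1
  funext i
  rw [Finset.card_filter]

lemma sTrans_lt {a x y : ℕ} (h : y < x) (hne : ¬(x = a + 1 ∧ y = a)) :
    sTrans a y < sTrans a x := by
  unfold sTrans
  rw [Equiv.swap_apply_def, Equiv.swap_apply_def]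
  split_ifs <;> omega

lemma card_invSet_sTrans_mul (n : ℕ) (v : Equiv.Perm ℕ) (a : ℕ) :
    (invSet n v).card ≤ (invSet n (sTrans a * v)).card + 1 := by
  set q : ℕ × ℕ := (v.symm (a + 1), v.symm a) with hq
  have hsub : invSet n v ⊆ insert q (invSet n (sTrans a * v)) := by
    rw [Finset.subset_insert_iff]
    intro p hp
    rw [Finset.mem_erase] at hp
    obtain ⟨hpq, hp⟩ := hp
    rw [invSet, Finset.mem_filter] at hp ⊢
    refine ⟨hp.1, hp.2.1, ?_⟩
    have hne : ¬(v p.1 = a + 1 ∧ v p.2 = a) := by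
      rintro ⟨h1, h2⟩
      apply hpq
      have e1 : p.1 = v.symm (a+1) := by rw [← h1]; simp
      have e2 : p.2 = v.symm a := by rw [← h2]; simp
      rw [hq, ← e1, ← e2]
    have := sTrans_lt hp.2.2 hne
    simpa [Equiv.Perm.mul_apply] using this
  calc (invSet n v).card ≤ (insert q (invSet n (sTrans a * v))).card := Finset.card_le_card hsub
    _ ≤ (invSet n (sTrans a * v)).card + 1 := Finset.card_insert_le _ _

lemma card_invSet_le_length (n : ℕ) (M : List ℕ) :
    (invSet n (wordProd M)).card ≤ M.length := by
  induction M with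
  | nil =>
      have : invSet n (wordProd []) = ∅ := by
        apply Finset.eq_empty_of_forall_notMem
        intro p hp
        rw [invSet, Finset.mem_filter] at hp
        simp [wordProd] at hp
        omega
      simp [this]
  | cons a M ih =>
      rw [wordProd_cons, List.length_cons]
      have h1 := card_invSet_sTrans_mul n (sTrans a * wordProd M) a
      have h2 : sTrans a * (sTrans a * wordProd M) = wordProd M := by
        rw [← mul_assoc]
        simp [sTrans]
      rw [h2] at h1
      omega

lemma minimality (n : ℕ) (v : Equiv.Perm ℕ) (M : List ℕ) (h : wordProd M = v) :
    ∑ i ∈ Finset.Icc 1 n, permCode n v i ≤ M.length := by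
  rw [← card_invSet, ← h]
  exact card_invSet_le_length n M

-- ## basic IsPermOn facts
lemma IsPermOn.fix {n : ℕ} {v : Equiv.Perm ℕ} (hv : IsPermOn n v) {i : ℕ}
    (h : ¬(1 ≤ i ∧ i ≤ n)) : v i = i := by
  by_contra hc; exact h (hv i hc)

lemma IsPermOn.maps {n : ℕ} {v : Equiv.Perm ℕ} (hv : IsPermOn n v) {i : ℕ}
    (h1 : 1 ≤ i) (h2 : i ≤ n) : 1 ≤ v i ∧ v i ≤ n := by
  by_cases hfix : v i = i
  · rw [hfix]; exact ⟨h1, h2⟩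
  · have : v (v i) ≠ v i := fun hc => hfix (v.injective hc)
    exact hv (v i) this

lemma IsPermOn.inv {n : ℕ} {v : Equiv.Perm ℕ} (hv : IsPermOn n v) : IsPermOn n v⁻¹ := by
  intro i hi
  apply hv
  intro hc
  apply hi
  rw [Equiv.Perm.inv_eq_iff_eq]
  exact hc.symm

lemma IsPermOn.mul {n : ℕ} {u v : Equiv.Perm ℕ} (hu : IsPermOn n u) (hv : IsPermOn n v) :
    IsPermOn n (u * v) := by
  intro i hi
  by_cases h : v i = i
  · apply hu; rwa [Equiv.Perm.mul_apply, h] at hi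
  · exact hv i h

lemma sTrans_isPermOn {n a : ℕ} (h1 : 1 ≤ a) (h2 : a + 1 ≤ n) : IsPermOn n (sTrans a) := by
  intro i hi
  unfold sTrans at hi
  by_cases h : i = a ∨ i = a + 1
  · rcases h with rfl | rfl <;> omega
  · push_neg at h
    exact absurd (Equiv.swap_apply_of_ne_of_ne h.1 h.2) hi

-- key counting lemma: if `v` fixes everything below `i`, then `c_i = v i - i`.
lemma permCode_of_fix_below {n : ℕ} {v : Equiv.Perm ℕ} (hv : IsPermOn n v) {i : ℕ}
    (hi1 : 1 ≤ i) (hi2 : i ≤ n) (hfix : ∀ k, k < i → v k = k) :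
    i ≤ v i ∧ permCode n v i = v i - i := by
  have hvi_ge : i ≤ v i := by
    by_contra hc
    push_neg at hc
    have h1 := hfix (v i) hc
    have h2 := v.injective h1
    omega
  refine ⟨hvi_ge, ?_⟩
  unfold permCode
  rw [show v i - i = (Finset.Ico i (v i)).card by rw [Nat.card_Ico]]
  apply Finset.card_bij (fun j _ => v j)
  · intro j hj
    rw [Finset.mem_filter, Finset.mem_Icc] at hj
    obtain ⟨⟨hj1, hj2⟩, hij, hvj⟩ := hj
    rw [Finset.mem_Ico]
    refine ⟨?_, hvj⟩
    by_contra hc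
    push_neg at hc
    have h1 := hfix (v j) hc
    have h2 := v.injective h1
    omega
  · intro j1 h1 j2 h2 he
    exact v.injective he
  · intro m hm
    rw [Finset.mem_Ico] at hm
    obtain ⟨hm1, hm2⟩ := hm
    have hvj : v (v.symm m) = m := v.apply_symm_apply m
    have hji : i < v.symm m := by
      rcases Nat.lt_trichotomy (v.symm m) i with h | h | h
      · have := hfix (v.symm m) h
        omega
      · rw [h] at hvj
        omega
      · exact h
    have hvin : v i ≤ n := (hv.maps hi1 hi2).2
    have hjn : v.symm m ≤ n := by
      by_cases hfx : v (v.symm m) = v.symm m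
      · omega
      · exact (hv _ hfx).2
    exact ⟨v.symm m, by rw [Finset.mem_filter, Finset.mem_Icc]; exact ⟨⟨by omega, hjn⟩, hji, by omega⟩, hvj⟩

lemma eq_one_of_codes_zero {n : ℕ} {v : Equiv.Perm ℕ} (hv : IsPermOn n v)
    (h : ∀ i, 1 ≤ i → i ≤ n → permCode n v i = 0) : v = 1 := by
  have key : ∀ k, k ≤ n → v k = k := by
    intro k
    induction k using Nat.strong_induction_on with
    | _ k ih =>
      intro hk
      by_cases h0 : k = 0
      · subst h0
        exact hv.fix (by omega)
      · have := permCode_of_fix_below hv (by omega) hk (fun m hm => ih m hm (by omega))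
        rw [h k (by omega) hk] at this
        omega
  ext x
  by_cases hx : x ≤ n
  · simpa using key x hx
  · simpa using hv.fix (by omega)

lemma sTrans_lt_iff {a z z' : ℕ} (hz : z ≠ a + 1) (hz' : z' ≠ a + 1) :
    sTrans a z < sTrans a z' ↔ z < z' := by
  unfold sTrans
  rw [Equiv.swap_apply_def, Equiv.swap_apply_def]
  split_ifs <;> omega

-- ## the peeling step
lemma peel_vi0 {n : ℕ} {v : Equiv.Perm ℕ} (hv : IsPermOn n v) {i0 : ℕ}
    (hi01 : 1 ≤ i0) (hi02 : i0 ≤ n) (hfix : ∀ k, k < i0 → v k = k) :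
    v i0 = i0 + permCode n v i0 := by
  have := permCode_of_fix_below hv hi01 hi02 hfix
  omega

lemma peel_a_le {n : ℕ} {v : Equiv.Perm ℕ} (hv : IsPermOn n v) {i0 : ℕ}
    (hi01 : 1 ≤ i0) (hi02 : i0 ≤ n) (hfix : ∀ k, k < i0 → v k = k) :
    i0 + permCode n v i0 ≤ n := by
  have h1 := (hv.maps hi01 hi02).2
  have h2 := peel_vi0 hv hi01 hi02 hfix
  omega

lemma peel_fix_below {n : ℕ} {v : Equiv.Perm ℕ} {i0 : ℕ}
    (hfix : ∀ k, k < i0 → v k = k) (hc : 1 ≤ permCode n v i0) :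
    ∀ k, k < i0 → (sTrans (i0 + permCode n v i0 - 1) * v) k = k := by
  intro k hk
  rw [Equiv.Perm.mul_apply, hfix k hk]
  unfold sTrans
  apply Equiv.swap_apply_of_ne_of_ne <;> omega

lemma peel_code_i0 {n : ℕ} {v : Equiv.Perm ℕ} (hv : IsPermOn n v) {i0 : ℕ}
    (hi01 : 1 ≤ i0) (hi02 : i0 ≤ n) (hfix : ∀ k, k < i0 → v k = k)
    (hc : 1 ≤ permCode n v i0) :
    permCode n (sTrans (i0 + permCode n v i0 - 1) * v) i0 = permCode n v i0 - 1 := by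
  set c := permCode n v i0 with hcdef
  set a := i0 + c - 1 with hadef
  set v' := sTrans a * v with hv'def
  have hvi0 : v i0 = i0 + c := peel_vi0 hv hi01 hi02 hfix
  have han : a + 1 ≤ n := by
    have := peel_a_le hv hi01 hi02 hfix
    omega
  have hv' : IsPermOn n v' := (sTrans_isPermOn (by omega) han).mul hv
  have hv'i0 : v' i0 = a := by
    rw [hv'def, Equiv.Perm.mul_apply, hvi0]
    unfold sTrans
    rw [show i0 + c = a + 1 by omega]
    exact Equiv.swap_apply_right _ _
  have := permCode_of_fix_below hv' hi01 hi02 (peel_fix_below hfix hc)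
  rw [hv'i0] at this
  omega

lemma peel_code_ne {n : ℕ} {v : Equiv.Perm ℕ} (hv : IsPermOn n v) {i0 : ℕ}
    (hi01 : 1 ≤ i0) (hi02 : i0 ≤ n) (hfix : ∀ k, k < i0 → v k = k)
    (hc : 1 ≤ permCode n v i0) {i : ℕ} (hi1 : 1 ≤ i) (hi2 : i ≤ n) (hne : i ≠ i0) :
    permCode n (sTrans (i0 + permCode n v i0 - 1) * v) i = permCode n v i := by
  set c := permCode n v i0 with hcdef
  set a := i0 + c - 1 with hadef
  set v' := sTrans a * v with hv'def
  have hvi0 : v i0 = i0 + c := peel_vi0 hv hi01 hi02 hfix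
  have han : a + 1 ≤ n := by
    have := peel_a_le hv hi01 hi02 hfix
    omega
  have hv' : IsPermOn n v' := (sTrans_isPermOn (by omega) han).mul hv
  rcases Nat.lt_or_ge i i0 with h | h
  · have e1 := permCode_of_fix_below hv hi1 hi2 (fun k hk => hfix k (by omega))
    have e2 := permCode_of_fix_below hv' hi1 hi2
      (fun k hk => peel_fix_below hfix hc k (by omega))
    have e3 : v i = i := hfix i h
    have e4 : v' i = i := peel_fix_below hfix hc i h
    omega
  · have hii0 : i0 < i := by omega
    have hvine : v i ≠ a + 1 := by
      intro hcon
      have : v i = v i0 := by omega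
      have := v.injective this
      omega
    unfold permCode
    congr 1
    apply Finset.filter_congr
    intro j hj
    rw [Finset.mem_Icc] at hj
    have key : ∀ (hj' : i < j), (v' j < v' i ↔ v j < v i) := by
      intro hj'
      have hvjne : v j ≠ a + 1 := by
        intro hcon
        have : v j = v i0 := by omega
        have := v.injective this
        omega
      rw [hv'def, Equiv.Perm.mul_apply, Equiv.Perm.mul_apply]
      exact sTrans_lt_iff hvjne hvine
    constructor
    · rintro ⟨h1, h2⟩
      exact ⟨h1, (key h1).mp h2⟩
    · rintro ⟨h1, h2⟩
      exact ⟨h1, (key h1).mpr h2⟩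

lemma permCode_le (n : ℕ) (v : Equiv.Perm ℕ) (i : ℕ) : permCode n v i ≤ n - i := by
  unfold permCode
  calc ((Finset.Icc 1 n).filter (fun j => i < j ∧ v j < v i)).card
      ≤ (Finset.Icc (i+1) n).card := by
        apply Finset.card_le_card
        intro j hj
        rw [Finset.mem_filter, Finset.mem_Icc] at hj
        rw [Finset.mem_Icc]
        omega
    _ ≤ n - i := by rw [Nat.card_Icc]; omega

lemma rbot_key (n : ℕ) : ∀ m, ∀ v : Equiv.Perm ℕ, IsPermOn n v →
    (∑ i ∈ Finset.Icc 1 n, permCode n v i) = m →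
    wordProd (rcWord (rcList (Rbot n v))) = v ∧ (rcList (Rbot n v)).length = m := by
  intro m
  induction m using Nat.strong_induction_on with
  | _ m ih =>
    intro v hv hsum
    by_cases hm : m = 0
    · subst hm
      have hz : ∀ i ∈ Finset.Icc 1 n, permCode n v i = 0 :=
        (Finset.sum_eq_zero_iff).mp hsum
      have hRempty : Rbot n v = ∅ := by
        apply Finset.eq_empty_of_forall_notMem
        rintro ⟨x, y⟩ hp
        rw [Rbot, Finset.mem_filter, Finset.mem_product, Finset.mem_Icc, Finset.mem_Icc] at hp
        dsimp only at hp
        have := hz x (Finset.mem_Icc.mpr ⟨hp.1.1.1, hp.1.1.2⟩)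
        omega
      have hv1 : v = 1 := eq_one_of_codes_zero hv
        (fun i h1 h2 => hz i (Finset.mem_Icc.mpr ⟨h1, h2⟩))
      rw [hRempty]
      unfold rcList
      rw [Finset.sort_empty]
      exact ⟨by rw [hv1]; rfl, rfl⟩
    · -- find the first nonzero row
      have hSne : ((Finset.Icc 1 n).filter (fun i => permCode n v i ≠ 0)).Nonempty := by
        by_contra hcon
        rw [Finset.not_nonempty_iff_eq_empty, Finset.filter_eq_empty_iff] at hcon
        apply hm
        rw [← hsum]
        apply Finset.sum_eq_zero
        intro i hi
        have := hcon hi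
        simpa using this
      set S := (Finset.Icc 1 n).filter (fun i => permCode n v i ≠ 0) with hSdef
      set i0 := S.min' hSne with hi0def
      have hi0S : i0 ∈ S := Finset.min'_mem _ _
      rw [hSdef, Finset.mem_filter, Finset.mem_Icc] at hi0S
      obtain ⟨⟨hi01, hi02⟩, hi0c⟩ := hi0S
      have hc : 1 ≤ permCode n v i0 := by omega
      have hfix : ∀ k, k < i0 → v k = k := by
        intro k
        induction k using Nat.strong_induction_on with
        | _ k ihk =>
          intro hk
          by_cases hk0 : k = 0
          · subst hk0
            exact hv.fix (by omega)
          · have hkn : k ≤ n := by omega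
            have hkS : k ∉ S := fun hmem => absurd (Finset.min'_le S k hmem) (by omega)
            rw [hSdef, Finset.mem_filter, Finset.mem_Icc] at hkS
            push_neg at hkS
            have hck : permCode n v k = 0 := hkS ⟨by omega, hkn⟩
            have := permCode_of_fix_below hv (by omega) hkn
              (fun j hj => ihk j hj (by omega))
            omega
      set c := permCode n v i0 with hcdef
      set a := i0 + c - 1 with hadef
      set v' := sTrans a * v with hv'def
      have hvi0 : v i0 = i0 + c := peel_vi0 hv hi01 hi02 hfix
      have han : a + 1 ≤ n := by
        have := peel_a_le hv hi01 hi02 hfix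
        omega
      have hv' : IsPermOn n v' := (sTrans_isPermOn (by omega) han).mul hv
      have hcode0 : permCode n v' i0 = c - 1 := peel_code_i0 hv hi01 hi02 hfix hc
      have hcodene : ∀ i, 1 ≤ i → i ≤ n → i ≠ i0 → permCode n v' i = permCode n v i :=
        fun i h1 h2 h3 => peel_code_ne hv hi01 hi02 hfix hc h1 h2 h3
      have hi0Icc : i0 ∈ Finset.Icc 1 n := Finset.mem_Icc.mpr ⟨hi01, hi02⟩
      have hsum' : ∑ i ∈ Finset.Icc 1 n, permCode n v' i = m - 1 := by
        rw [← Finset.sum_erase_add _ _ hi0Icc] at hsum ⊢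
        have he : ∑ i ∈ (Finset.Icc 1 n).erase i0, permCode n v' i
            = ∑ i ∈ (Finset.Icc 1 n).erase i0, permCode n v i := by
          apply Finset.sum_congr rfl
          intro i hi
          rw [Finset.mem_erase, Finset.mem_Icc] at hi
          exact hcodene i hi.2.1 hi.2.2 hi.1
        rw [he, hcode0]
        omega
      have hcn : c ≤ n := by
        have := permCode_le n v i0
        omega
      have hR : Rbot n v = insert (i0, c) (Rbot n v') := by
        ext ⟨x, y⟩
        simp only [Rbot, Finset.mem_insert, Finset.mem_filter, Finset.mem_product,
          Finset.mem_Icc, Prod.mk.injEq]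
        constructor
        · rintro ⟨⟨⟨hx1, hx2⟩, ⟨hy1, hy2⟩⟩, hle⟩
          by_cases hx0 : x = i0
          · subst hx0
            by_cases hyc : y = c
            · exact Or.inl ⟨rfl, hyc⟩
            · refine Or.inr ⟨⟨⟨hx1, hx2⟩, ⟨hy1, hy2⟩⟩, ?_⟩
              rw [hcode0]
              omega
          · exact Or.inr ⟨⟨⟨hx1, hx2⟩, ⟨hy1, hy2⟩⟩, by rw [hcodene x hx1 hx2 hx0]; exact hle⟩
        · rintro (⟨rfl, rfl⟩ | ⟨⟨⟨hx1, hx2⟩, ⟨hy1, hy2⟩⟩, hle⟩)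
          · exact ⟨⟨⟨hi01, hi02⟩, ⟨hc, hcn⟩⟩, le_refl _⟩
          · refine ⟨⟨⟨hx1, hx2⟩, ⟨hy1, hy2⟩⟩, ?_⟩
            by_cases hx0 : x = i0
            · subst hx0
              rw [hcode0] at hle
              omega
            · rw [← hcodene x hx1 hx2 hx0]
              exact hle
      have hnotmem : (i0, c) ∉ Rbot n v' := by
        rw [Rbot, Finset.mem_filter]
        rintro ⟨-, hle⟩
        rw [hcode0] at hle
        omega
      have hlt : ∀ q ∈ Rbot n v', rcLT (i0, c) q := by
        rintro ⟨x, y⟩ hq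
        rw [Rbot, Finset.mem_filter, Finset.mem_product, Finset.mem_Icc, Finset.mem_Icc] at hq
        dsimp only at hq
        obtain ⟨⟨⟨hx1, hx2⟩, ⟨hy1, hy2⟩⟩, hle⟩ := hq
        rcases Nat.lt_trichotomy x i0 with h | h | h
        · exfalso
          have e := permCode_of_fix_below hv' hx1 hx2
            (fun k hk => peel_fix_below hfix hc k (by omega))
          have : v' x = x := peel_fix_below hfix hc x h
          omega
        · subst h
          rw [hcode0] at hle
          exact Or.inr ⟨rfl, by omega⟩
        · exact Or.inl h
      rw [hR, rcList_insert hlt hnotmem]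
      obtain ⟨ihp, ihl⟩ := ih (m - 1) (by omega) v' hv' hsum'
      constructor
      · show wordProd (rcWord ((i0, c) :: rcList (Rbot n v'))) = v
        unfold rcWord
        rw [List.map_cons]
        show wordProd ((i0 + c - 1) :: rcWord (rcList (Rbot n v'))) = v
        rw [wordProd_cons, ihp, hv'def, ← mul_assoc, ← hadef, sTrans_invol, one_mul]
      · rw [List.length_cons, ihl]
        omega

lemma rbot_isRCGraph (n : ℕ) {v : Equiv.Perm ℕ} (hv : IsPermOn n v) :
    IsRCGraph n v (Rbot n v) := by
  constructor
  · rintro ⟨x, y⟩ hp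
    rw [Rbot, Finset.mem_filter, Finset.mem_product, Finset.mem_Icc, Finset.mem_Icc] at hp
    dsimp only at hp
    have := permCode_le n v x
    exact ⟨hp.1.1.1, hp.1.2.1, by omega⟩
  · intro L hL
    rw [reading_eq_rcList hL]
    obtain ⟨hp, hlen⟩ := rbot_key n _ v hv rfl
    refine ⟨?_, hp, ?_⟩
    · intro b hb
      obtain ⟨p, hpmem, rfl⟩ := List.mem_map.mp hb
      have hpR : p ∈ Rbot n v := (rcList_isReading (Rbot n v)).1 ▸ List.mem_toFinset.mpr hpmem
      rw [Rbot, Finset.mem_filter, Finset.mem_product, Finset.mem_Icc, Finset.mem_Icc] at hpR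
      have h1 := hpR.1.1.1
      have h2 := hpR.1.2.1
      omega
    · intro M hM hMp
      rw [rcWord_length, hlen]
      exact minimality n v M hMp


/-- Transposition `R ↦ {(j,i) : (i,j) ∈ R}` is a bijection between the rc-graphs of `w`
and those of `w⁻¹`; in particular `R_top(w)` is the transpose of `R_bot(w⁻¹)` and is an
rc-graph for `w`. -/
theorem stmt15 (n : ℕ) (w : Equiv.Perm ℕ) (hw : IsPermOn n w) :
    (∀ R : Finset (ℕ × ℕ),
      IsRCGraph n w R ↔ IsRCGraph n w⁻¹ (R.image (fun p => (p.2, p.1)))) ∧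
    Rtop n w = (Rbot n w⁻¹).image (fun p => (p.2, p.1)) ∧
    IsRCGraph n w (Rtop n w) := by
  have hiff : ∀ (u : Equiv.Perm ℕ) (R : Finset (ℕ × ℕ)),
      IsRCGraph n u R ↔ IsRCGraph n u⁻¹ (R.image swapf) := by
    intro u R
    constructor
    · exact transpose_forward
    · intro h
      have := transpose_forward h
      rwa [inv_inv, Finset.image_image, swapf_swapf, Finset.image_id] at this
  have h2 : Rtop n w = (Rbot n w⁻¹).image swapf := by
    ext ⟨x, y⟩
    simp only [Rtop, Rbot, Finset.mem_image, Finset.mem_filter, Finset.mem_product,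
      Finset.mem_Icc]
    constructor
    · rintro ⟨⟨⟨hx1, hx2⟩, ⟨hy1, hy2⟩⟩, hle⟩
      exact ⟨(y, x), ⟨⟨⟨hy1, hy2⟩, ⟨hx1, hx2⟩⟩, hle⟩, rfl⟩
    · rintro ⟨⟨a, b⟩, ⟨⟨⟨ha1, ha2⟩, ⟨hb1, hb2⟩⟩, hle⟩, heq⟩
      rw [swapf, Prod.mk.injEq] at heq
      obtain ⟨rfl, rfl⟩ := heq
      exact ⟨⟨⟨hb1, hb2⟩, ⟨ha1, ha2⟩⟩, hle⟩
  refine ⟨fun R => hiff w R, h2, ?_⟩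
  rw [h2]
  apply (hiff w ((Rbot n w⁻¹).image swapf)).mpr
  rw [Finset.image_image, swapf_swapf, Finset.image_id]
  exact rbot_isRCGraph n hw.inv
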